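/- arXiv:1612.01485 — 2 statements merged into one kernel-verified Lean document; each statement's English description precedes it below -/
import Mathlib

section
/- Define recursively φₙ₊₁ + vₙ₊₁/2 = Gₙ, vₙ₊₁ ∈ sign(φₙ₊₁), Gₙ₊₁ = Gₙ − vₙ₊₁, starting from a real number G₀. Then for all n ≥ 1, |φₙ| ≤ max(|G₀| − (n − 1/2), 0) and |Gₙ| ≤ max(|G₀| − n, 1). In particular φₙ = 0 for all n > |G₀| + 1/2. -/
/-! Each step of the recursion is soft thresholding: `φₙ₊₁ = Gₙ ∓ 1/2` when `|Gₙ| > 1/2` and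
`φₙ₊₁ = 0` otherwise, so `|φₙ₊₁| = max (|Gₙ| - 1/2) 0`; and `Gₙ₊₁` is `Gₙ ∓ 1` or `-Gₙ`, so
`|Gₙ₊₁| ≤ max (|Gₙ| - 1) (1/2)`. Iterating gives `|Gₙ| ≤ max (|G₀| - n) (1/2)`, and the bound on
`φₙ₊₁` follows from the one on `Gₙ`. -/

open Real Set

/-- The multivalued sign function. -/
def msign (x : ℝ) : Set ℝ :=
  if 0 < x then {1} else if x < 0 then {-1} else Set.Icc (-1) 1

lemma mem_msign_iff {x y : ℝ} :
    y ∈ msign x ↔ (0 < x ∧ y = 1) ∨ (x < 0 ∧ y = -1) ∨ (x = 0 ∧ |y| ≤ 1) := by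
  unfold msign
  split_ifs with hpos hneg
  · simp [hpos, hpos.ne', hpos.not_gt]
  · simp [hneg, hneg.ne, hneg.not_gt]
  · have hx : x = 0 := le_antisymm (not_lt.mp hpos) (not_lt.mp hneg)
    simp [hx, abs_le]

section Step

variable {g p w : ℝ}

lemma abs_le_max_of_mem_msign (h : p + w / 2 = g) (hw : w ∈ msign p) :
    |p| ≤ max (|g| - 1/2) 0 := by
  subst h
  rcases mem_msign_iff.mp hw with ⟨hp, rfl⟩ | ⟨hp, rfl⟩ | ⟨rfl, -⟩
  · rw [abs_of_pos hp, abs_of_pos (by linarith)]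
    exact le_max_of_le_left (by linarith)
  · rw [abs_of_neg hp, abs_of_neg (by linarith)]
    exact le_max_of_le_left (by linarith)
  · simp

lemma abs_sub_le_max_of_mem_msign (h : p + w / 2 = g) (hw : w ∈ msign p) :
    |g - w| ≤ max (|g| - 1) (1/2) := by
  subst h
  rcases mem_msign_iff.mp hw with ⟨hp, rfl⟩ | ⟨hp, rfl⟩ | ⟨rfl, hw_le⟩
  · rw [abs_of_pos (by linarith : 0 < p + 1 / 2)]
    exact abs_le.2 ⟨by linarith [le_max_right (p + 1 / 2 - 1) (1/2)], le_max_left _ _⟩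
  · rw [abs_of_neg (by linarith : p + -1 / 2 < 0)]
    exact abs_le.2 ⟨by linarith [le_max_left (-(p + -1 / 2) - 1) (1/2)],
      by linarith [le_max_right (-(p + -1 / 2) - 1) (1/2)]⟩
  · rw [abs_le] at hw_le
    exact le_max_of_le_right (abs_le.2 ⟨by linarith, by linarith⟩)

end Step

def IsSignRecursion (G φ v : ℕ → ℝ) : Prop :=
  ∀ n : ℕ, φ (n+1) + v (n+1) / 2 = G n ∧ v (n+1) ∈ msign (φ (n+1)) ∧ G (n+1) = G n - v (n+1)

namespace IsSignRecursion

variable {G φ v : ℕ → ℝ}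

lemma abs_G_le (hrec : IsSignRecursion G φ v) (n : ℕ) : |G n| ≤ max (|G 0| - n) (1/2) := by
  induction n with
  | zero => simp
  | succ n ih =>
    obtain ⟨hφ, hv, hG⟩ := hrec n
    rw [hG]
    refine (abs_sub_le_max_of_mem_msign hφ hv).trans (max_le ?_ (le_max_right _ _))
    push_cast
    rcases le_max_iff.mp ih with h | h
    · exact le_max_of_le_left (by linarith)
    · exact le_max_of_le_right (by linarith)

lemma abs_φ_succ_le (hrec : IsSignRecursion G φ v) (n : ℕ) :
    |φ (n+1)| ≤ max (|G 0| - ((n+1 : ℕ) - 1/2 : ℝ)) 0 := by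
  obtain ⟨hφ, hv, -⟩ := hrec n
  refine (abs_le_max_of_mem_msign hφ hv).trans (max_le ?_ (le_max_right _ _))
  push_cast
  rcases le_max_iff.mp (hrec.abs_G_le n) with h | h
  · exact le_max_of_le_left (by linarith)
  · exact le_max_of_le_right (by linarith)

end IsSignRecursion

/-- For the recursion `φₙ₊₁ + vₙ₊₁/2 = Gₙ`, `vₙ₊₁ ∈ sign(φₙ₊₁)`,
`Gₙ₊₁ = Gₙ − vₙ₊₁`, one has `|φₙ| ≤ max (|G₀| − (n − 1/2)) 0` and
`|Gₙ| ≤ max (|G₀| − n) 1` for `n ≥ 1`; in particular `φₙ = 0` for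
`n > |G₀| + 1/2`. -/
theorem stmt_12 (G φ v : ℕ → ℝ)
    (hrec : ∀ n : ℕ, φ (n+1) + v (n+1) / 2 = G n ∧
      v (n+1) ∈ msign (φ (n+1)) ∧ G (n+1) = G n - v (n+1)) :
    (∀ n : ℕ, 1 ≤ n →
      |φ n| ≤ max (|G 0| - ((n:ℝ) - 1/2)) 0 ∧
      |G n| ≤ max (|G 0| - (n:ℝ)) 1) ∧
    (∀ n : ℕ, |G 0| + 1/2 < (n:ℝ) → φ n = 0) := by
  have hrec : IsSignRecursion G φ v := hrec
  refine ⟨fun n hn => ?_, fun n hn => ?_⟩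
  · obtain ⟨m, rfl⟩ := Nat.exists_eq_add_of_le' hn
    exact ⟨hrec.abs_φ_succ_le m, (hrec.abs_G_le _).trans (max_le_max le_rfl (by norm_num))⟩
  · obtain ⟨m, rfl⟩ := Nat.exists_eq_add_one_of_ne_zero (n := n)
      (by rintro rfl; linarith [abs_nonneg (G 0)])
    have hneg : |G 0| - ((m+1 : ℕ) - 1/2 : ℝ) ≤ 0 := by linarith
    exact abs_nonpos_iff.mp ((hrec.abs_φ_succ_le m).trans_eq (max_eq_right hneg))
end

section
/- In the recursion φₙ₊₁ + vₙ₊₁/2 = Gₙ, vₙ₊₁ ∈ sign(φₙ₊₁), Gₙ₊₁ = Gₙ − vₙ₊₁ with initial data G₀ ∈ ℝ, the sequence |Gₙ| is nonincreasing once |Gₙ| ≤ 1, and if |G₀| ≤ 1/2 then Gₙ = (−1)ⁿ G₀ and φₙ = 0 for all n ≥ 1. -/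
open Real Set

/-- In the recursion `φₙ₊₁ + vₙ₊₁/2 = Gₙ`, `vₙ₊₁ ∈ sign(φₙ₊₁)`,
`Gₙ₊₁ = Gₙ − vₙ₊₁`, the sequence `|Gₙ|` is nonincreasing once `|Gₙ| ≤ 1`; and
if `|G₀| ≤ 1/2` then `Gₙ = (−1)ⁿ G₀` and `φₙ = 0` for all `n ≥ 1`. -/
theorem stmt_13 (G φ v : ℕ → ℝ)
    (hrec : ∀ n : ℕ, φ (n+1) + v (n+1) / 2 = G n ∧
      v (n+1) ∈ msign (φ (n+1)) ∧ G (n+1) = G n - v (n+1)) :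
    (∀ n : ℕ, |G n| ≤ 1 → |G (n+1)| ≤ |G n|) ∧
    (|G 0| ≤ 1/2 →
      (∀ n : ℕ, G n = (-1)^n * G 0) ∧ (∀ n : ℕ, 1 ≤ n → φ n = 0)) := by
  have step : ∀ n : ℕ, |G n| ≤ 1/2 → φ (n+1) = 0 ∧ G (n+1) = -G n := by
    intro n hGn
    obtain ⟨h1, h2, h3⟩ := hrec n
    have habs := abs_le.mp hGn
    unfold msign at h2
    split_ifs at h2 with hp hn
    · rw [Set.mem_singleton_iff] at h2
      linarith
    · rw [Set.mem_singleton_iff] at h2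
      linarith
    · have hφ : φ (n+1) = 0 := le_antisymm (not_lt.mp hp) (not_lt.mp hn)
      exact ⟨hφ, by rw [h3]; linarith [hφ ▸ h1]⟩
  constructor
  · intro n _
    obtain ⟨h1, h2, h3⟩ := hrec n
    unfold msign at h2
    split_ifs at h2 with hp hn
    · rw [Set.mem_singleton_iff] at h2
      have hG : G n = φ (n+1) + 1/2 := by rw [h2] at h1; linarith
      have : |G n| = G n := abs_of_pos (by rw [hG]; linarith)
      rw [this, abs_le]
      rw [h2] at h3
      constructor <;> linarith
    · rw [Set.mem_singleton_iff] at h2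
      have hG : G n = φ (n+1) - 1/2 := by rw [h2] at h1; linarith
      have : |G n| = -G n := abs_of_neg (by rw [hG]; linarith)
      rw [this, abs_le]
      rw [h2] at h3
      constructor <;> linarith
    · have hφ : φ (n+1) = 0 := le_antisymm (not_lt.mp hp) (not_lt.mp hn)
      have : G (n+1) = -G n := by rw [h3]; linarith [hφ ▸ h1]
      rw [this, abs_neg]
  · intro h0
    have key : ∀ n : ℕ, G n = (-1)^n * G 0 := by
      intro n
      induction n with
      | zero => simp
      | succ n ih =>
        have hb : |G n| ≤ 1/2 := by
          rw [ih, abs_mul, abs_pow, abs_neg, abs_one, one_pow, one_mul]; exact h0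
        rw [(step n hb).2, ih, pow_succ]; ring
    refine ⟨key, ?_⟩
    intro n hn
    obtain ⟨m, rfl⟩ := Nat.exists_eq_add_of_le hn
    have hb : |G m| ≤ 1/2 := by
      rw [key m, abs_mul, abs_pow, abs_neg, abs_one, one_pow, one_mul]; exact h0
    have := (step m hb).1
    simpa [Nat.add_comm] using this
end
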